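/- Let n be odd, l = ⌊n/2⌋, 0 ≤ i ≤ l−1, and ω_i = 1/(4(l−i)(n−l+i)). For any A ⊆ [n] with |A| = l−i, the vector x* = ((n−|A|) 1_A + |A| 1_{A^c}) / sqrt(n|A|(n−|A|)) is an eigenvector of T_{ω_i} with eigenvalue λ* = sqrt(n/(|A|(n−|A|))), and the vector v = 1_A − 1_{A^c} is orthogonal to x* and satisfies v^T H(x*) v = 0, where H(x*) = 2 T_{ω_i}(I,I,x*) − λ* I; hence the projected Hessian H_p(x*) is rank deficient and (x*, λ*) is not Newton-stable. -/

import Mathlib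

/-!
Write `a = |A|`, `b = n - a` and `s = √(nab)`, so that `x* = (b 1_A + a 1_{Aᶜ}) / s`,
`Σ x* = 2ab/s` and `λ* = n/s`. With `ω = 1/(4ab)` the rank-one part of `T_ω(I,I,x*)` is
`(1/(2s)) 1 1ᵀ`, and a two-line computation shows that `v = 1_A - 1_{Aᶜ}` is not only
`H(x*)`-isotropic but lies in the kernel of `H(x*)`. Since `v ⟂ x*`, `v` is fixed by the
projection `U Uᵀ = I - x* x*ᵀ`, so `Uᵀ v` is a nonzero vector in the kernel of `Uᵀ H(x*) U`.
-/

open scoped RealInnerProductSpace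
open Finset Matrix

noncomputable section

/-- Interpret a plain function as a vector of `EuclideanSpace ℝ (Fin n)`. -/
def toE {n : ℕ} (v : Fin n → ℝ) : EuclideanSpace ℝ (Fin n) :=
  (WithLp.equiv 2 (Fin n → ℝ)).symm v

/-- `T_ω(I,x,x)` for the cubic tensor `T_ω = Σᵢ eᵢ⊗eᵢ⊗eᵢ + ω(𝟙⊗𝟙⊗𝟙)` on `ℝⁿ`:
its `i`-th coordinate is `xᵢ² + ω (Σₖ xₖ)²`. -/
def twvec (n : ℕ) (ω : ℝ) (x : EuclideanSpace ℝ (Fin n)) : EuclideanSpace ℝ (Fin n) :=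
  toE fun i => x i ^ 2 + ω * (∑ k, x k) ^ 2

/-- `T_ω(I,I,x) = diag(x) + ω (Σₖ xₖ) 𝟙𝟙ᵀ`. -/
def twmat (n : ℕ) (ω : ℝ) (x : EuclideanSpace ℝ (Fin n)) : Matrix (Fin n) (Fin n) ℝ :=
  Matrix.of fun i j => (if i = j then x i else 0) + ω * (∑ k, x k)

namespace Matrix

variable {m k R : Type*} [Fintype m] [Fintype k] [DecidableEq k]

theorem one_sub_vecMulVec_self_mulVec_of_dotProduct_eq_zero [DecidableEq m] [CommRing R]
    {x v : m → R} (h : x ⬝ᵥ v = 0) : (1 - vecMulVec x x) *ᵥ v = v := by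
  rw [sub_mulVec, one_mulVec, vecMulVec_mulVec, h, MulOpposite.op_zero, zero_smul, sub_zero]

theorem not_isUnit_transpose_mul_mul_of_mulVec_eq_zero [CommSemiring R] {U : Matrix m k R}
    {H : Matrix m m R} {v : m → R} (hv : v ≠ 0) (hUv : (U * Uᵀ) *ᵥ v = v) (hHv : H *ᵥ v = 0) :
    ¬IsUnit (Uᵀ * H * U) := by
  intro hunit
  have hker : (Uᵀ * H * U) *ᵥ (Uᵀ *ᵥ v) = 0 := by
    rw [Matrix.mul_assoc, ← mulVec_mulVec, ← mulVec_mulVec, mulVec_mulVec _ U, hUv, hHv,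
      mulVec_zero]
  have hw : Uᵀ *ᵥ v = 0 := mulVec_injective_of_isUnit hunit (by rw [hker, mulVec_zero])
  exact hv (by rw [← hUv, ← mulVec_mulVec, hw, mulVec_zero])

end Matrix

theorem Real.sqrt_div_eq_div_sqrt_mul {c : ℝ} (hc : 0 ≤ c) (x : ℝ) :
    √(c / x) = c / √(c * x) := by
  rcases hc.eq_or_lt with rfl | hc
  · simp
  calc √(c / x) = √(c ^ 2 / (c * x)) := by rw [sq, mul_div_mul_left _ _ hc.ne']
    _ = c / √(c * x) := by rw [Real.sqrt_div (sq_nonneg c), Real.sqrt_sq hc.le]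

theorem norm_toE {n : ℕ} (v : Fin n → ℝ) : ‖toE v‖ = √(v ⬝ᵥ v) := by
  rw [norm_eq_sqrt_real_inner, toE, WithLp.equiv_symm_apply, EuclideanSpace.inner_toLp_toLp,
    star_trivial]

theorem inner_toE {n : ℕ} (u v : Fin n → ℝ) : ⟪toE u, toE v⟫ = v ⬝ᵥ u := by
  rw [toE, toE, WithLp.equiv_symm_apply, EuclideanSpace.inner_toLp_toLp, star_trivial]

theorem twmat_mulVec {n : ℕ} (ω : ℝ) (x : EuclideanSpace ℝ (Fin n)) (y : Fin n → ℝ) :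
    twmat n ω x *ᵥ y = fun i => x i * y i + ω * (∑ k, x k) * ∑ k, y k := by
  ext i
  simp [twmat, mulVec, dotProduct, add_mul, sum_add_distrib, ite_mul, mul_sum]

section TwoBlockVectors

variable {n : ℕ} (A : Finset (Fin n))

theorem sum_ite_mem_const (p q : ℝ) :
    ∑ j, (if j ∈ A then p else q) = #A * p + (n - #A) * q := by
  rw [← sum_add_sum_compl A, sum_congr rfl fun j hj => if_pos hj,
    sum_congr rfl fun j hj => if_neg (mem_compl.1 hj), sum_const, sum_const, card_compl,
    Fintype.card_fin, nsmul_eq_mul, nsmul_eq_mul,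
    Nat.cast_sub (card_le_univ A |>.trans_eq (Fintype.card_fin n))]

-- The paper's `x*` and `v = 1_A - 1_{Aᶜ}`.
def starVec : Fin n → ℝ :=
  fun j => (if j ∈ A then (n : ℝ) - #A else (#A : ℝ)) / √((n : ℝ) * #A * ((n : ℝ) - #A))

def signVec : Fin n → ℝ :=
  fun j => if j ∈ A then 1 else -1

theorem sum_starVec :
    ∑ j, starVec A j = 2 * #A * (n - #A) / √((n : ℝ) * #A * ((n : ℝ) - #A)) := by
  simp only [starVec, ite_div, sum_ite_mem_const]
  ring

theorem sum_signVec : ∑ j, signVec A j = #A - (n - #A) := by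
  simp only [signVec, sum_ite_mem_const]
  ring

theorem starVec_dotProduct_signVec : starVec A ⬝ᵥ signVec A = 0 := by
  simp only [dotProduct, starVec, signVec, ite_div, ite_mul_ite, sum_ite_mem_const]
  ring

theorem signVec_ne_zero (hA : A.Nonempty) : signVec A ≠ 0 := by
  obtain ⟨j, hj⟩ := hA
  exact Function.ne_iff.2 ⟨j, by simp [signVec, hj]⟩

variable {A}

theorem starVec_dotProduct_self (hA : 0 < #A) (hAn : #A < n) : starVec A ⬝ᵥ starVec A = 1 := by
  have ha : (0 : ℝ) < #A := by exact_mod_cast hA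
  have hb : (0 : ℝ) < n - #A := sub_pos.2 (by exact_mod_cast hAn)
  simp only [dotProduct, starVec, ite_div, ite_mul_ite, sum_ite_mem_const]
  set s := √((n : ℝ) * #A * ((n : ℝ) - #A))
  have hs : s ^ 2 = n * #A * (n - #A) := Real.sq_sqrt (by positivity)
  have hs0 : 0 < s := Real.sqrt_pos.2 (mul_pos (mul_pos (ha.trans (sub_pos.1 hb)) ha) hb)
  field_simp
  linear_combination -hs

theorem norm_toE_starVec (hA : 0 < #A) (hAn : #A < n) : ‖toE (starVec A)‖ = 1 := by
  rw [norm_toE, starVec_dotProduct_self hA hAn, Real.sqrt_one]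

theorem twvec_starVec (hA : 0 < #A) (hAn : #A < n) :
    twvec n (1 / (4 * #A * (n - #A))) (toE (starVec A)) =
      √((n : ℝ) / (#A * (n - #A))) • toE (starVec A) := by
  have ha : (0 : ℝ) < #A := by exact_mod_cast hA
  have hb : (0 : ℝ) < n - #A := sub_pos.2 (by exact_mod_cast hAn)
  rw [Real.sqrt_div_eq_div_sqrt_mul (Nat.cast_nonneg n), ← mul_assoc]
  ext j
  simp only [twvec, toE, WithLp.equiv_symm_apply, PiLp.toLp_apply, PiLp.smul_apply, smul_eq_mul,
    sum_starVec]
  by_cases hj : j ∈ A <;> simp only [starVec, hj, if_true, if_false]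
  all_goals
    set s := √((n : ℝ) * #A * ((n : ℝ) - #A))
    field_simp
    ring

theorem hessian_mulVec_signVec_eq_zero (hA : 0 < #A) (hAn : #A < n) :
    ((2 : ℝ) • twmat n (1 / (4 * #A * (n - #A))) (toE (starVec A)) -
      √((n : ℝ) / (#A * (n - #A))) • (1 : Matrix (Fin n) (Fin n) ℝ)) *ᵥ signVec A = 0 := by
  have ha : (0 : ℝ) < #A := by exact_mod_cast hA
  have hb : (0 : ℝ) < n - #A := sub_pos.2 (by exact_mod_cast hAn)
  rw [Real.sqrt_div_eq_div_sqrt_mul (Nat.cast_nonneg n), ← mul_assoc]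
  ext j
  simp only [sub_mulVec, smul_mulVec, one_mulVec, twmat_mulVec, toE, WithLp.equiv_symm_apply,
    sum_starVec, sum_signVec, Pi.sub_apply, Pi.smul_apply, smul_eq_mul, Pi.zero_apply]
  by_cases hj : j ∈ A <;> simp only [starVec, signVec, hj, if_true, if_false]
  all_goals
    set s := √((n : ℝ) * #A * ((n : ℝ) - #A))
    field_simp
    ring

end TwoBlockVectors

theorem stmt_18_general {n : ℕ} (i : ℕ) (hi : i < n / 2)
    (A : Finset (Fin n)) (hA : A.card = n / 2 - i) :
    ‖toE fun j => (if j ∈ A then (n : ℝ) - A.card else (A.card : ℝ)) /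
        Real.sqrt ((n : ℝ) * A.card * ((n : ℝ) - A.card))‖ = 1 ∧
    twvec n (1 / (4 * (((n / 2 : ℕ) : ℝ) - i) * ((n : ℝ) - ((n / 2 : ℕ) : ℝ) + i)))
        (toE fun j => (if j ∈ A then (n : ℝ) - A.card else (A.card : ℝ)) /
          Real.sqrt ((n : ℝ) * A.card * ((n : ℝ) - A.card))) =
      Real.sqrt ((n : ℝ) / ((A.card : ℝ) * ((n : ℝ) - A.card))) •
        (toE fun j => (if j ∈ A then (n : ℝ) - A.card else (A.card : ℝ)) /
          Real.sqrt ((n : ℝ) * A.card * ((n : ℝ) - A.card))) ∧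
    ⟪toE fun j => (if j ∈ A then (1 : ℝ) else -1),
        toE fun j => (if j ∈ A then (n : ℝ) - A.card else (A.card : ℝ)) /
          Real.sqrt ((n : ℝ) * A.card * ((n : ℝ) - A.card))⟫ = 0 ∧
    (fun j => (if j ∈ A then (1 : ℝ) else -1)) ⬝ᵥ
      (((2 : ℝ) • twmat n
            (1 / (4 * (((n / 2 : ℕ) : ℝ) - i) * ((n : ℝ) - ((n / 2 : ℕ) : ℝ) + i)))
            (toE fun j => (if j ∈ A then (n : ℝ) - A.card else (A.card : ℝ)) /
              Real.sqrt ((n : ℝ) * A.card * ((n : ℝ) - A.card))) -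
          Real.sqrt ((n : ℝ) / ((A.card : ℝ) * ((n : ℝ) - A.card))) •
            (1 : Matrix (Fin n) (Fin n) ℝ)).mulVec
        fun j => (if j ∈ A then (1 : ℝ) else -1)) = 0 ∧
    ∀ U : Matrix (Fin n) (Fin (n - 1)) ℝ, Uᵀ * U = 1 →
      U * Uᵀ = 1 - Matrix.vecMulVec
        (fun j => (if j ∈ A then ((n : ℝ) - A.card) else (A.card : ℝ)) /
          Real.sqrt ((n : ℝ) * A.card * ((n : ℝ) - A.card)))
        (fun j => (if j ∈ A then ((n : ℝ) - A.card) else (A.card : ℝ)) /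
          Real.sqrt ((n : ℝ) * A.card * ((n : ℝ) - A.card))) →
      ¬ IsUnit (Uᵀ *
          (((2 : ℝ) • twmat n
              (1 / (4 * (((n / 2 : ℕ) : ℝ) - i) * ((n : ℝ) - ((n / 2 : ℕ) : ℝ) + i)))
              (toE fun j => (if j ∈ A then (n : ℝ) - A.card else (A.card : ℝ)) /
                Real.sqrt ((n : ℝ) * A.card * ((n : ℝ) - A.card))) -
            Real.sqrt ((n : ℝ) / ((A.card : ℝ) * ((n : ℝ) - A.card))) •
              (1 : Matrix (Fin n) (Fin n) ℝ))) * U) := by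
  have hA0 : 0 < #A := by omega
  have hAn : #A < n := by omega
  have hl : ((n / 2 : ℕ) : ℝ) - i = #A := by rw [hA, Nat.cast_sub hi.le]
  have hr : (n : ℝ) - ((n / 2 : ℕ) : ℝ) + i = n - #A := by rw [← hl]; ring
  rw [hl, hr]
  refine ⟨norm_toE_starVec hA0 hAn, twvec_starVec hA0 hAn, ?_, ?_, fun U _ hUU => ?_⟩
  · exact (inner_toE _ _).trans (starVec_dotProduct_signVec A)
  · exact (congrArg (signVec A ⬝ᵥ ·) (hessian_mulVec_signVec_eq_zero hA0 hAn)).trans (dotProduct_zero _)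
  · refine not_isUnit_transpose_mul_mul_of_mulVec_eq_zero (signVec_ne_zero A (card_pos.1 hA0))
      ?_ (hessian_mulVec_signVec_eq_zero hA0 hAn)
    rw [hUU]
    exact one_sub_vecMulVec_self_mulVec_of_dotProduct_eq_zero (starVec_dotProduct_signVec A)

/-- for `n` odd, `l = ⌊n/2⌋`, `0 ≤ i < l`, `ωᵢ = 1/(4(l−i)(n−l+i))` and
`A ⊆ [n]` with `|A| = l−i`, the vector
`x* = ((n−|A|) 1_A + |A| 1_{Aᶜ}) / √(n|A|(n−|A|))` is a unit eigenvector of `T_{ωᵢ}`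
with eigenvalue `λ* = √(n/(|A|(n−|A|)))`; the vector `v = 1_A − 1_{Aᶜ}` is orthogonal
to `x*` and satisfies `vᵀ H(x*) v = 0` for `H(x*) = 2 T_{ωᵢ}(I,I,x*) − λ* I`; hence
the projected Hessian `H_p(x*) = Uᵀ H(x*) U` is rank deficient, i.e. `(x*, λ*)` is
not Newton-stable. -/
theorem stmt_18 {n : ℕ} (hn : Odd n) (i : ℕ) (hi : i < n / 2)
    (A : Finset (Fin n)) (hA : A.card = n / 2 - i) :
    ‖toE fun j => (if j ∈ A then (n : ℝ) - A.card else (A.card : ℝ)) /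
        Real.sqrt ((n : ℝ) * A.card * ((n : ℝ) - A.card))‖ = 1 ∧
    twvec n (1 / (4 * (((n / 2 : ℕ) : ℝ) - i) * ((n : ℝ) - ((n / 2 : ℕ) : ℝ) + i)))
        (toE fun j => (if j ∈ A then (n : ℝ) - A.card else (A.card : ℝ)) /
          Real.sqrt ((n : ℝ) * A.card * ((n : ℝ) - A.card))) =
      Real.sqrt ((n : ℝ) / ((A.card : ℝ) * ((n : ℝ) - A.card))) •
        (toE fun j => (if j ∈ A then (n : ℝ) - A.card else (A.card : ℝ)) /
          Real.sqrt ((n : ℝ) * A.card * ((n : ℝ) - A.card))) ∧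
    ⟪toE fun j => (if j ∈ A then (1 : ℝ) else -1),
        toE fun j => (if j ∈ A then (n : ℝ) - A.card else (A.card : ℝ)) /
          Real.sqrt ((n : ℝ) * A.card * ((n : ℝ) - A.card))⟫ = 0 ∧
    (fun j => (if j ∈ A then (1 : ℝ) else -1)) ⬝ᵥ
      (((2 : ℝ) • twmat n
            (1 / (4 * (((n / 2 : ℕ) : ℝ) - i) * ((n : ℝ) - ((n / 2 : ℕ) : ℝ) + i)))
            (toE fun j => (if j ∈ A then (n : ℝ) - A.card else (A.card : ℝ)) /
              Real.sqrt ((n : ℝ) * A.card * ((n : ℝ) - A.card))) -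
          Real.sqrt ((n : ℝ) / ((A.card : ℝ) * ((n : ℝ) - A.card))) •
            (1 : Matrix (Fin n) (Fin n) ℝ)).mulVec
        fun j => (if j ∈ A then (1 : ℝ) else -1)) = 0 ∧
    ∀ U : Matrix (Fin n) (Fin (n - 1)) ℝ, Uᵀ * U = 1 →
      U * Uᵀ = 1 - Matrix.vecMulVec
        (fun j => (if j ∈ A then ((n : ℝ) - A.card) else (A.card : ℝ)) /
          Real.sqrt ((n : ℝ) * A.card * ((n : ℝ) - A.card)))
        (fun j => (if j ∈ A then ((n : ℝ) - A.card) else (A.card : ℝ)) /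
          Real.sqrt ((n : ℝ) * A.card * ((n : ℝ) - A.card))) →
      ¬ IsUnit (Uᵀ *
          (((2 : ℝ) • twmat n
              (1 / (4 * (((n / 2 : ℕ) : ℝ) - i) * ((n : ℝ) - ((n / 2 : ℕ) : ℝ) + i)))
              (toE fun j => (if j ∈ A then (n : ℝ) - A.card else (A.card : ℝ)) /
                Real.sqrt ((n : ℝ) * A.card * ((n : ℝ) - A.card))) -
            Real.sqrt ((n : ℝ) / ((A.card : ℝ) * ((n : ℝ) - A.card))) •
              (1 : Matrix (Fin n) (Fin n) ℝ))) * U) :=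
  stmt_18_general i hi A hA
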